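/- arXiv:2301.12003 — 3 statements merged into one kernel-verified Lean document; each statement's English description precedes it below -/
import Mathlib

section
/- (Proposition 1, time-averaged form.) Let f : ℝ^d × (0,1] → ℝ^d be measurable such that ω ↦ f(X_t(ω), t) is square-integrable for each t ∈ (0,1]. Then the degree of intersection averaged over t uniform on (0,1] is bounded by the weighted denoising loss: ∫₀¹ E‖(Z − X) − E[Z − X | 𝔪_t]‖² dt ≤ ∫₀¹ (1/t²)·E‖X − f(X_t, t)‖² dt. -/
/-!
Conditional expectation given `𝔪` is the orthogonal projection of `L²` onto the `𝔪`-measurable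
functions, hence the best `𝔪`-measurable predictor in mean square. Since `Z - X = t⁻¹ • (X_t - X)`,
the `𝔪_t`-measurable function `t⁻¹ • (X_t - f(X_t, t))` predicts `Z - X` with error
`t⁻¹ • (f(X_t, t) - X)`; this bounds the integrand at every `t ∈ (0, 1]`.
-/

open MeasureTheory

namespace MeasureTheory

variable {α E : Type*} {m m0 : MeasurableSpace α} {μ : Measure α}
  [NormedAddCommGroup E] [InnerProductSpace ℝ E]

theorem L2.norm_sq_eq_integral_norm_sq (f : α →₂[μ] E) :
    ‖f‖ ^ 2 = ∫ a, ‖f a‖ ^ 2 ∂μ := by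
  simp only [← real_inner_self_eq_norm_sq, L2.inner_def]

variable [CompleteSpace E]

theorem norm_sub_condExpL2_le (hm : m ≤ m0) (f g : α →₂[μ] E)
    (hg : g ∈ lpMeas E ℝ m 2 μ) : ‖f - condExpL2 E ℝ hm f‖ ≤ ‖f - g‖ := by
  have : Fact (m ≤ m0) := ⟨hm⟩
  have h := (Submodule.starProjection_minimal (U := lpMeas E ℝ m 2 μ) f).le.trans
    (ciInf_le ⟨0, Set.forall_mem_range.2 fun _ => norm_nonneg _⟩ ⟨g, hg⟩)
  exact h

theorem integral_norm_sub_condExp_sq_le [IsFiniteMeasure μ] (hm : m ≤ m0)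
    {f g : α → E} (hf : MemLp f 2 μ) (hg : MemLp g 2 μ) (hgm : AEStronglyMeasurable[m] g μ) :
    ∫ a, ‖f a - μ[f|m] a‖ ^ 2 ∂μ ≤ ∫ a, ‖f a - g a‖ ^ 2 ∂μ := by
  set F := hf.toLp f
  set G := hg.toLp g
  have hG : G ∈ lpMeas E ℝ m 2 μ :=
    mem_lpMeas_iff_aestronglyMeasurable.2 (hgm.congr hg.coeFn_toLp.symm)
  calc ∫ a, ‖f a - μ[f|m] a‖ ^ 2 ∂μ = ‖F - condExpL2 E ℝ hm F‖ ^ 2 := by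
        rw [L2.norm_sq_eq_integral_norm_sq]
        refine integral_congr_ae ?_
        filter_upwards [Lp.coeFn_sub F (condExpL2 E ℝ hm F : α →₂[μ] E), hf.coeFn_toLp,
          hf.condExpL2_ae_eq_condExp (𝕜 := ℝ) hm] with a h1 h2 h3
        rw [h1, Pi.sub_apply, h2, h3]
    _ ≤ ‖F - G‖ ^ 2 := by gcongr; exact norm_sub_condExpL2_le hm F G hG
    _ = ∫ a, ‖f a - g a‖ ^ 2 ∂μ := by
        rw [L2.norm_sq_eq_integral_norm_sq]
        refine integral_congr_ae ?_
        filter_upwards [Lp.coeFn_sub F G, hf.coeFn_toLp, hg.coeFn_toLp] with a h1 h2 h3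
        rw [h1, Pi.sub_apply, h2, h3]

theorem integral_norm_sub_condExp_sq_le_of_interpolant [IsFiniteMeasure μ]
    (hm : m ≤ m0) {X Z g : α → E} {t : ℝ} (ht : t ≠ 0) (hX : MemLp X 2 μ) (hZ : MemLp Z 2 μ)
    (hXt : AEStronglyMeasurable[m] (fun a => (1 - t) • X a + t • Z a) μ)
    (hg : MemLp g 2 μ) (hgm : AEStronglyMeasurable[m] g μ) :
    ∫ a, ‖(Z a - X a) - μ[(fun a => Z a - X a)|m] a‖ ^ 2 ∂μ
      ≤ 1 / t ^ 2 * ∫ a, ‖X a - g a‖ ^ 2 ∂μ := by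
  have hresidual : ∀ a, (Z a - X a) - t⁻¹ • (((1 - t) • X a + t • Z a) - g a)
      = t⁻¹ • (g a - X a) := fun a => by
    match_scalars <;> field_simp <;> ring
  calc ∫ a, ‖(Z a - X a) - μ[(fun a => Z a - X a)|m] a‖ ^ 2 ∂μ
      ≤ ∫ a, ‖(Z a - X a) - t⁻¹ • (((1 - t) • X a + t • Z a) - g a)‖ ^ 2 ∂μ :=
        integral_norm_sub_condExp_sq_le hm (hZ.sub hX)
          (((hX.const_smul (1 - t)).add (hZ.const_smul t)).sub hg |>.const_smul t⁻¹)
          ((hXt.sub hgm).const_smul t⁻¹)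
    _ = 1 / t ^ 2 * ∫ a, ‖X a - g a‖ ^ 2 ∂μ := by
        simp_rw [hresidual, norm_smul, norm_sub_rev (g _), mul_pow, ← integral_const_mul]
        simp [one_div, inv_pow, sq_abs]

end MeasureTheory

theorem avg_degree_of_intersection_le_weighted_denoising_loss_general
    {Ω : Type*} [MeasurableSpace Ω] (P : Measure Ω) [IsProbabilityMeasure P]
    (d : ℕ)
    (X Z : Ω → EuclideanSpace ℝ (Fin d)) (hX : Measurable X) (hZ : Measurable Z)
    (hX2 : MemLp X 2 P) (hZ2 : MemLp Z 2 P)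
    (f : EuclideanSpace ℝ (Fin d) → ℝ → EuclideanSpace ℝ (Fin d))
    (hf : Measurable (Function.uncurry f))
    (hf2 : ∀ t ∈ Set.Ioc (0 : ℝ) 1,
      MemLp (fun ω => f ((1 - t) • X ω + t • Z ω) t) 2 P) :
    ∫⁻ t in Set.Ioc (0 : ℝ) 1,
        ENNReal.ofReal (∫ ω, ‖(Z ω - X ω) -
          (P[(fun ω' => Z ω' - X ω') |
            MeasurableSpace.comap (fun ω' => (1 - t) • X ω' + t • Z ω') inferInstance]) ω‖ ^ 2 ∂P)
      ≤ ∫⁻ t in Set.Ioc (0 : ℝ) 1,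
        ENNReal.ofReal ((1 / t ^ 2) *
          ∫ ω, ‖X ω - f ((1 - t) • X ω + t • Z ω) t‖ ^ 2 ∂P) := by
  refine setLIntegral_mono' measurableSet_Ioc fun t ht => ENNReal.ofReal_le_ofReal ?_
  have hXt : Measurable fun ω => (1 - t) • X ω + t • Z ω := by fun_prop
  have hXt_comap : Measurable[MeasurableSpace.comap _ inferInstance]
      fun ω => (1 - t) • X ω + t • Z ω := comap_measurable _
  have hg := hf.comp (hXt_comap.prodMk (measurable_const (a := t)))
  exact integral_norm_sub_condExp_sq_le_of_interpolant hXt.comap_le ht.1.ne' hX2 hZ2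
    hXt_comap.aestronglyMeasurable (hf2 t ht) hg.aestronglyMeasurable

/-- **Proposition 1, time-averaged form.** Let `f : ℝ^d × (0,1] → ℝ^d` be
measurable such that `ω ↦ f(X_t(ω), t)` is square-integrable for each `t ∈ (0,1]`. Then the
degree of intersection averaged over `t` uniform on `(0,1]` is bounded by the weighted
denoising loss:
`∫₀¹ E‖(Z − X) − E[Z − X | 𝔪_t]‖² dt ≤ ∫₀¹ (1/t²)·E‖X − f(X_t, t)‖² dt`
(both sides are nonnegative; the integrals over `t` are taken in `ℝ≥0∞`). -/
theorem avg_degree_of_intersection_le_weighted_denoising_loss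
    {Ω : Type*} [MeasurableSpace Ω] (P : Measure Ω) [IsProbabilityMeasure P]
    (d : ℕ) (hd : 1 ≤ d)
    (X Z : Ω → EuclideanSpace ℝ (Fin d)) (hX : Measurable X) (hZ : Measurable Z)
    (hX2 : MemLp X 2 P) (hZ2 : MemLp Z 2 P)
    (f : EuclideanSpace ℝ (Fin d) → ℝ → EuclideanSpace ℝ (Fin d))
    (hf : Measurable (Function.uncurry f))
    (hf2 : ∀ t ∈ Set.Ioc (0 : ℝ) 1,
      MemLp (fun ω => f ((1 - t) • X ω + t • Z ω) t) 2 P) :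
    ∫⁻ t in Set.Ioc (0 : ℝ) 1,
        ENNReal.ofReal (∫ ω, ‖(Z ω - X ω) -
          (P[(fun ω' => Z ω' - X ω') |
            MeasurableSpace.comap (fun ω' => (1 - t) • X ω' + t • Z ω') inferInstance]) ω‖ ^ 2 ∂P)
      ≤ ∫⁻ t in Set.Ioc (0 : ℝ) 1,
        ENNReal.ofReal ((1 / t ^ 2) *
          ∫ ω, ‖X ω - f ((1 - t) • X ω + t • Z ω) t‖ ^ 2 ∂P) :=
  avg_degree_of_intersection_le_weighted_denoising_loss_general P d X Z hX hZ hX2 hZ2 f hf hf2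
end

section
/- If the forward trajectories have zero degree of intersection at time t ∈ (0,1], i.e. E‖(Z − X) − E[Z − X | 𝔪_t]‖² = 0, then the posterior of the data given the interpolated point is degenerate: X = E[X | 𝔪_t] almost surely (so X is determined by X_t, i.e. the conditional distribution of X given X_t is a Dirac mass), and likewise Z = E[Z | 𝔪_t] almost surely. -/
/-!
Write `W = Z - X`. Since `E[W | 𝔪_t]` is again square integrable, a vanishing degree of
intersection forces `W = E[W | 𝔪_t]` almost surely. Both `X = X_t - t • W` and
`Z = X_t + (1 - t) • W` are then sums of the `𝔪_t`-measurable `X_t` and a multiple of `W`,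
and such sums are fixed by `E[· | 𝔪_t]`.
-/

open MeasureTheory

namespace MeasureTheory

variable {α E : Type*} {m m₀ : MeasurableSpace α} {μ : Measure α} [NormedAddCommGroup E]

theorem MemLp.ae_eq_zero_of_integral_norm_sq_eq_zero {f : α → E} (hf : MemLp f 2 μ)
    (h : ∫ a, ‖f a‖ ^ 2 ∂μ = 0) : f =ᵐ[μ] 0 := by
  have hint : Integrable (fun a => ‖f a‖ ^ 2) μ :=
    (memLp_two_iff_integrable_sq_norm hf.aestronglyMeasurable).mp hf
  filter_upwards [(integral_eq_zero_iff_of_nonneg (fun a => by positivity) hint).mp h]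
    with a ha
  simpa using ha

variable [NormedSpace ℝ E] [CompleteSpace E]

theorem ae_eq_condExp_of_integral_norm_sub_condExp_sq_eq_zero {f : α → E} (hf : MemLp f 2 μ)
    (h : ∫ a, ‖f a - μ[f | m] a‖ ^ 2 ∂μ = 0) : f =ᵐ[μ] μ[f | m] := by
  have hdiff : MemLp (f - μ[f | m]) 2 μ := hf.sub (hf.condExp one_le_two)
  filter_upwards [hdiff.ae_eq_zero_of_integral_norm_sq_eq_zero h] with a ha
  exact sub_eq_zero.mp ha

theorem condExp_add_smul_of_ae_eq_condExp (hm : m ≤ m₀) [SigmaFinite (μ.trim hm)]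
    {g f : α → E} (hg : StronglyMeasurable[m] g) (hgi : Integrable g μ) (hfi : Integrable f μ)
    (hf : f =ᵐ[μ] μ[f | m]) (c : ℝ) :
    μ[g + c • f | m] =ᵐ[μ] g + c • f := by
  filter_upwards [condExp_add hgi (hfi.smul c) m, condExp_smul c f m, hf] with a hadd hsmul hfa
  rw [hadd, Pi.add_apply, condExp_of_stronglyMeasurable hm hg hgi, hsmul]
  simp [hfa]

end MeasureTheory

/-- If the forward trajectories have zero degree of intersection at time
`t ∈ (0,1]`, i.e. `E‖(Z − X) − E[Z − X | 𝔪_t]‖² = 0`, then the posterior of the data given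
the interpolated point is degenerate: `X = E[X | 𝔪_t]` almost surely, and likewise
`Z = E[Z | 𝔪_t]` almost surely. -/
theorem zero_intersection_implies_degenerate_posterior
    {Ω : Type*} [MeasurableSpace Ω] (P : Measure Ω) [IsProbabilityMeasure P]
    (d : ℕ) (hd : 1 ≤ d)
    (X Z : Ω → EuclideanSpace ℝ (Fin d)) (hX : Measurable X) (hZ : Measurable Z)
    (hX2 : MemLp X 2 P) (hZ2 : MemLp Z 2 P)
    (t : ℝ) (ht : t ∈ Set.Ioc (0 : ℝ) 1)
    (Xt : Ω → EuclideanSpace ℝ (Fin d)) (hXt : Xt = fun ω => (1 - t) • X ω + t • Z ω)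
    (mt : MeasurableSpace Ω) (hmt : mt = MeasurableSpace.comap Xt inferInstance)
    (hI : ∫ ω, ‖(Z ω - X ω) - (P[(fun ω' => Z ω' - X ω') | mt]) ω‖ ^ 2 ∂P = 0) :
    X =ᵐ[P] P[X | mt] ∧ Z =ᵐ[P] P[Z | mt] := by
  -- the local `mt` would otherwise be found first by instance search
  rename_i m₀ _
  set W := fun ω => Z ω - X ω
  have hle : mt ≤ m₀ :=
    hmt ▸ (hXt ▸ (hX.const_smul (1 - t)).add (hZ.const_smul t) : Measurable[m₀] Xt).comap_le
  have hXt_meas : StronglyMeasurable[mt] Xt :=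
    (hmt ▸ comap_measurable Xt : Measurable[mt] Xt).stronglyMeasurable
  have hXt_int : Integrable Xt P :=
    hXt ▸ ((hX2.const_smul (1 - t)).add (hZ2.const_smul t)).integrable one_le_two
  have hW_int : Integrable W P := (hZ2.sub hX2).integrable one_le_two
  have hW : W =ᵐ[P] P[W | mt] :=
    ae_eq_condExp_of_integral_norm_sub_condExp_sq_eq_zero (hZ2.sub hX2) hI
  have hX_eq : X = Xt + (-t) • W := by
    ext1 ω
    simp only [hXt, W, Pi.add_apply, Pi.smul_apply]
    module
  have hZ_eq : Z = Xt + (1 - t) • W := by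
    ext1 ω
    simp only [hXt, W, Pi.add_apply, Pi.smul_apply]
    module
  constructor
  · rw [hX_eq]
    exact (condExp_add_smul_of_ae_eq_condExp hle hXt_meas hXt_int hW_int hW _).symm
  · rw [hZ_eq]
    exact (condExp_add_smul_of_ae_eq_condExp hle hXt_meas hXt_int hW_int hW _).symm
end

section
/- (Upper bound on the aggregated-posterior KL via a Gaussian decoder.) Let μ be a probability measure on ℝ^d with a strictly positive density f with respect to Lebesgue measure, p a probability measure on ℝ^k, κ a Markov kernel from ℝ^d to ℝ^k with aggregated posterior q_Z := ∫ κ(x) dμ(x), and let x_ψ : ℝ^k → ℝ^d be measurable and σ > 0. Assume κ(x) ≪ p for μ-a.e. x, the mutual information I(X;Z) = D_KL(μ ⊗ κ ‖ μ × q_Z) is finite, and the expectations below are finite. Then D_KL(q_Z ‖ p) ≤ (1/(2σ²))·∫∫ ‖x_ψ(z) − x‖² dκ(x)(z) dμ(x) + (d/2)·log(2πσ²) + ∫ log f(x) dμ(x) + ∫ D_KL(κ(x) ‖ p) dμ(x). -/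
open MeasureTheory ProbabilityTheory
open scoped ENNReal Classical

/-- The Kullback–Leibler divergence `∫ log(dν/dρ) dν`, valued in `EReal`, taken to be `+∞`
when `ν` is not absolutely continuous with respect to `ρ` (or when the log-likelihood ratio
is not integrable). -/
noncomputable def klDiv {α : Type*} [MeasurableSpace α] (ν ρ : Measure α) : EReal :=
  if ν ≪ ρ ∧ Integrable (fun x => Real.log (ν.rnDeriv ρ x).toReal) ν
  then ((∫ x, Real.log (ν.rnDeriv ρ x).toReal ∂ν : ℝ) : EReal)
  else ⊤

open Real

/-!
Write `ρ = μ ⊗ κ`. Swapping the two factors and disintegrating `ρ` along `Z`, the chain rule for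
the Kullback–Leibler divergence turns `D(ρ ‖ μ × p) = ∫ D(κ(x) ‖ p) dμ(x)` into the identity
`D(q_Z ‖ p) + I(X;Z) = ∫ D(κ(x) ‖ p) dμ(x)`, so it remains to bound `I(X;Z)` from below.
For `G(x, z) = log (p_ψ(x|z) / f(x))` one has `∫ e^G d(μ × q_Z) = ∫∫ p_ψ(x|z) dx dq_Z(z) = 1`,
so the Donsker–Varadhan inequality gives `I(X;Z) ≥ ∫ G dρ`, which is minus the reconstruction,
normalisation and entropy terms of the bound.
-/

lemma lintegral_ofReal_div_withDensity {α : Type*} [MeasurableSpace α] {ν : Measure α}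
    {f g : α → ℝ} (hf : Measurable f) (hf_pos : ∀ x, 0 < f x) (hg : Measurable g) :
    ∫⁻ x, ENNReal.ofReal (g x / f x) ∂(ν.withDensity fun x => ENNReal.ofReal (f x))
      = ∫⁻ x, ENNReal.ofReal (g x) ∂ν := by
  rw [lintegral_withDensity_eq_lintegral_mul _ hf.ennreal_ofReal
    (show Measurable fun x => ENNReal.ofReal (g x / f x) by fun_prop)]
  refine lintegral_congr fun x => ?_
  rw [Pi.mul_apply, ← ENNReal.ofReal_mul (hf_pos x).le, mul_div_cancel₀ _ (hf_pos x).ne']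

lemma MeasureTheory.Integrable.comp_fst_compProd {α β F : Type*} [MeasurableSpace α]
    [MeasurableSpace β] [NormedAddCommGroup F] {μ : Measure α} [SFinite μ] {κ : Kernel α β}
    [IsMarkovKernel κ] {g : α → F} (hg : Integrable g μ) :
    Integrable (fun w : α × β => g w.1) (μ ⊗ₘ κ) := by
  rw [← Measure.fst_compProd μ κ, Measure.fst] at hg
  exact hg.comp_measurable measurable_fst

section KullbackLeibler

variable {α β : Type*} [MeasurableSpace α] [MeasurableSpace β]

lemma klDiv_map_measurableEquiv (e : α ≃ᵐ β) (ν ρ : Measure α) [IsFiniteMeasure ν]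
    [IsFiniteMeasure ρ] :
    InformationTheory.klDiv (ν.map e) (ρ.map e) = InformationTheory.klDiv ν ρ := by
  refine le_antisymm (InformationTheory.klDiv_map_le ν ρ e.measurable) ?_
  simpa [Measure.map_map e.symm.measurable e.measurable] using
    InformationTheory.klDiv_map_le (ν.map e) (ρ.map e) e.symm.measurable

lemma rnDeriv_compProd_ae_eq_kernel_rnDeriv [MeasurableSpace.CountableOrCountablyGenerated α β]
    {μ : Measure α} [IsFiniteMeasure μ] {κ η : Kernel α β} [IsFiniteKernel κ] [IsFiniteKernel η]
    (h : ∀ᵐ a ∂μ, κ a ≪ η a) :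
    (μ ⊗ₘ κ).rnDeriv (μ ⊗ₘ η) =ᵐ[μ ⊗ₘ η] fun w => κ.rnDeriv η w.1 w.2 := by
  have h_eq : μ ⊗ₘ κ = (μ ⊗ₘ η).withDensity fun w => κ.rnDeriv η w.1 w.2 := by
    rw [← Measure.compProd_withDensity (κ.measurable_rnDeriv η)]
    exact Measure.compProd_congr (h.mono fun a ha => (Kernel.withDensity_rnDeriv_eq ha).symm)
  rw [h_eq]
  exact Measure.rnDeriv_withDensity _ (κ.measurable_rnDeriv η)

lemma klDiv_compProd_eq_lintegral [MeasurableSpace.CountableOrCountablyGenerated α β]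
    {μ : Measure α} [IsFiniteMeasure μ] {κ η : Kernel α β} [IsFiniteKernel κ] [IsFiniteKernel η]
    (h : ∀ᵐ a ∂μ, κ a ≪ η a) :
    InformationTheory.klDiv (μ ⊗ₘ κ) (μ ⊗ₘ η) = ∫⁻ a, InformationTheory.klDiv (κ a) (η a) ∂μ := by
  rw [InformationTheory.klDiv_eq_lintegral_klFun_of_ac
      (Measure.AbsolutelyContinuous.compProd_right h),
    lintegral_congr_ae (by
      filter_upwards [rnDeriv_compProd_ae_eq_kernel_rnDeriv h] with w hw
      rw [hw]),
    Measure.lintegral_compProd (by fun_prop)]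
  refine lintegral_congr_ae ?_
  filter_upwards [h] with a ha
  rw [InformationTheory.klDiv_eq_lintegral_klFun_of_ac ha]
  refine lintegral_congr_ae ?_
  filter_upwards [Kernel.rnDeriv_eq_rnDeriv_measure (κ := κ) (η := η) (a := a)] with b hb
  rw [hb]

lemma klDiv_fst_prod_eq_add [StandardBorelSpace α] [Nonempty α] (ρ : Measure (α × β))
    [IsProbabilityMeasure ρ] (p : Measure β) [IsFiniteMeasure p] :
    InformationTheory.klDiv ρ (ρ.fst.prod p)
      = InformationTheory.klDiv ρ.snd p + InformationTheory.klDiv ρ (ρ.fst.prod ρ.snd) := by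
  set ρ' := ρ.map Prod.swap
  have h_disint : ρ.snd ⊗ₘ ρ'.condKernel = ρ' := by
    simpa [ρ'] using ρ'.disintegrate ρ'.condKernel
  have h_swap (q : Measure β) [IsFiniteMeasure q] :
      InformationTheory.klDiv ρ (ρ.fst.prod q)
        = InformationTheory.klDiv ρ' (q ⊗ₘ Kernel.const β ρ.fst) := by
    rw [← klDiv_map_measurableEquiv MeasurableEquiv.prodComm, Measure.compProd_const]
    exact congrArg (InformationTheory.klDiv ρ') Measure.prod_swap
  rw [h_swap, h_swap, ← h_disint, InformationTheory.klDiv_compProd_eq_add]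

lemma klDiv_snd_add_klDiv_prod_snd [StandardBorelSpace α] [Nonempty α]
    [MeasurableSpace.CountableOrCountablyGenerated α β] (μ : Measure α) [IsProbabilityMeasure μ]
    (κ : Kernel α β) [IsMarkovKernel κ] (p : Measure β) [IsProbabilityMeasure p]
    (h : ∀ᵐ a ∂μ, κ a ≪ p) :
    InformationTheory.klDiv (μ ⊗ₘ κ).snd p
        + InformationTheory.klDiv (μ ⊗ₘ κ) (μ.prod (μ ⊗ₘ κ).snd)
      = ∫⁻ a, InformationTheory.klDiv (κ a) p ∂μ := by
  have h_split := klDiv_fst_prod_eq_add (μ ⊗ₘ κ) p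
  rw [Measure.fst_compProd] at h_split
  rw [← h_split, ← Measure.compProd_const]
  simpa using klDiv_compProd_eq_lintegral (η := Kernel.const α p) h

lemma integral_sub_log_integral_exp_le_toReal_klDiv {ν ρ : Measure α} [IsProbabilityMeasure ν]
    [IsProbabilityMeasure ρ] {G : α → ℝ} (h : InformationTheory.klDiv ν ρ ≠ ∞)
    (hG : Integrable G ν) (h_exp : Integrable (fun x => exp (G x)) ρ) :
    ∫ x, G x ∂ν - log (∫ x, exp (G x) ∂ρ) ≤ (InformationTheory.klDiv ν ρ).toReal := by
  obtain ⟨hνρ, h_llr⟩ := InformationTheory.klDiv_ne_top_iff.mp h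
  have : IsProbabilityMeasure (ρ.tilted G) := isProbabilityMeasure_tilted h_exp
  have h_tilted := InformationTheory.integral_llr_add_sub_measure_univ_nonneg
    (hνρ.trans (absolutelyContinuous_tilted h_exp)) (integrable_llr_tilted_right hνρ hG h_llr h_exp)
  rw [integral_llr_tilted_right hνρ hG h_exp h_llr] at h_tilted
  rw [InformationTheory.toReal_klDiv_of_measure_eq hνρ (by simp)]
  simp only [probReal_univ, add_sub_cancel_right] at h_tilted
  linarith

end KullbackLeibler

section ERealKullbackLeibler

variable {α β : Type*} [MeasurableSpace α] [MeasurableSpace β]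

/-- Mathlib's `InformationTheory.klDiv` is `ℝ≥0∞`-valued and adds `ρ univ - ν univ` to the
integral; for probability measures the two notions agree. -/
lemma klDiv_eq_coe_klDiv (ν ρ : Measure α) [IsProbabilityMeasure ν] [IsProbabilityMeasure ρ] :
    klDiv ν ρ = (InformationTheory.klDiv ν ρ : EReal) := by
  unfold klDiv
  split_ifs with h
  · have h_nonneg := InformationTheory.integral_llr_add_sub_measure_univ_nonneg h.1 h.2
    rw [InformationTheory.klDiv_of_ac_of_integrable h.1 h.2, EReal.coe_ennreal_ofReal,
      max_eq_left h_nonneg]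
    simp [llr]
  · rw [InformationTheory.klDiv_eq_top_iff.2 fun hac hint => h ⟨hac, hint⟩]
    rfl

lemma klDiv_snd_compProd_eq_integral_klDiv_sub [StandardBorelSpace α] [Nonempty α]
    [MeasurableSpace.CountableOrCountablyGenerated α β] (μ : Measure α) [IsProbabilityMeasure μ]
    (κ : Kernel α β) [IsMarkovKernel κ] (p : Measure β) [IsProbabilityMeasure p]
    (hac : ∀ᵐ a ∂μ, κ a ≪ p) (hMI : klDiv (μ ⊗ₘ κ) (μ.prod (μ ⊗ₘ κ).snd) ≠ ⊤)
    (hkl_fin : ∀ᵐ a ∂μ, klDiv (κ a) p ≠ ⊤)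
    (hkl_int : Integrable (fun a => (klDiv (κ a) p).toReal) μ) :
    klDiv (μ ⊗ₘ κ).snd p = ((∫ a, (klDiv (κ a) p).toReal ∂μ
      - (klDiv (μ ⊗ₘ κ) (μ.prod (μ ⊗ₘ κ).snd)).toReal : ℝ) : EReal) := by
  simp_rw [klDiv_eq_coe_klDiv, EReal.toReal_coe_ennreal] at hMI hkl_fin hkl_int ⊢
  simp only [ne_eq, EReal.coe_ennreal_eq_top_iff] at hMI hkl_fin
  have h_lint : ∫⁻ a, InformationTheory.klDiv (κ a) p ∂μ
      = ENNReal.ofReal (∫ a, (InformationTheory.klDiv (κ a) p).toReal ∂μ) := by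
    rw [ofReal_integral_eq_lintegral_ofReal hkl_int (ae_of_all _ fun _ => ENNReal.toReal_nonneg)]
    exact lintegral_congr_ae (hkl_fin.mono fun a ha => (ENNReal.ofReal_toReal ha).symm)
  have h_golden := klDiv_snd_add_klDiv_prod_snd μ κ p hac
  rw [h_lint] at h_golden
  have h_snd_fin : InformationTheory.klDiv (μ ⊗ₘ κ).snd p ≠ ∞ :=
    (ENNReal.add_ne_top.mp (h_golden ▸ ENNReal.ofReal_ne_top)).1
  rw [← EReal.coe_ennreal_toReal h_snd_fin, EReal.coe_eq_coe_iff, eq_sub_iff_add_eq,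
    ← ENNReal.toReal_add h_snd_fin hMI, h_golden,
    ENNReal.toReal_ofReal (integral_nonneg fun _ => ENNReal.toReal_nonneg)]

end ERealKullbackLeibler

section Gaussian

variable {E : Type*} [NormedAddCommGroup E] [InnerProductSpace ℝ E] {σ : ℝ}

noncomputable def isotropicGaussianPDF (σ : ℝ) (c x : E) : ℝ :=
  (2 * π * σ ^ 2) ^ (-(Module.finrank ℝ E : ℝ) / 2) * exp (-‖x - c‖ ^ 2 / (2 * σ ^ 2))

lemma isotropicGaussianPDF_pos (hσ : σ ≠ 0) (c x : E) : 0 < isotropicGaussianPDF σ c x := by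
  unfold isotropicGaussianPDF
  positivity

lemma log_isotropicGaussianPDF (hσ : σ ≠ 0) (c x : E) :
    log (isotropicGaussianPDF σ c x)
      = -‖x - c‖ ^ 2 / (2 * σ ^ 2) - (Module.finrank ℝ E : ℝ) / 2 * log (2 * π * σ ^ 2) := by
  unfold isotropicGaussianPDF
  rw [log_mul (by positivity) (exp_pos _).ne', log_exp, log_rpow (by positivity)]
  ring

lemma log_isotropicGaussianPDF_div (hσ : σ ≠ 0) {a : ℝ} (ha : 0 < a) (y x : E) :
    log (isotropicGaussianPDF σ y x / a) = -(1 / (2 * σ ^ 2) * ‖y - x‖ ^ 2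
      + (Module.finrank ℝ E : ℝ) / 2 * log (2 * π * σ ^ 2) + log a) := by
  rw [log_div (isotropicGaussianPDF_pos hσ _ _).ne' ha.ne', log_isotropicGaussianPDF hσ,
    norm_sub_rev]
  ring

variable [FiniteDimensional ℝ E] [MeasurableSpace E] [BorelSpace E]

lemma integral_isotropicGaussianPDF (hσ : σ ≠ 0) (c : E) :
    ∫ x, isotropicGaussianPDF σ c x = 1 := by
  have h_norm : ∫ x : E, exp (-‖x‖ ^ 2 / (2 * σ ^ 2))
      = (2 * π * σ ^ 2) ^ ((Module.finrank ℝ E : ℝ) / 2) := by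
    simp_rw [neg_div, div_eq_inv_mul, ← neg_mul]
    rw [GaussianFourier.integral_rexp_neg_mul_sq_norm (by positivity)]
    congr 1
    field_simp
    ring
  unfold isotropicGaussianPDF
  rw [integral_const_mul, integral_sub_right_eq_self (fun x => exp (-‖x‖ ^ 2 / (2 * σ ^ 2))) c,
    h_norm, ← rpow_add (by positivity), neg_div, neg_add_cancel, rpow_zero]

lemma lintegral_ofReal_isotropicGaussianPDF (hσ : σ ≠ 0) (c : E) :
    ∫⁻ x, ENNReal.ofReal (isotropicGaussianPDF σ c x) = 1 := by
  rw [← ofReal_integral_eq_lintegral_ofReal, integral_isotropicGaussianPDF hσ, ENNReal.ofReal_one]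
  · exact Integrable.of_integral_ne_zero (by simp [integral_isotropicGaussianPDF hσ])
  · exact Filter.Eventually.of_forall fun x => (isotropicGaussianPDF_pos hσ c x).le

end Gaussian

section GaussianDecoder

variable {E β : Type*} [NormedAddCommGroup E] [InnerProductSpace ℝ E] [MeasurableSpace E]
  [MeasurableSpace β] {σ : ℝ} {f : E → ℝ} {c : β → E}

section CompProd

variable {μ : Measure E} [IsProbabilityMeasure μ] {κ : Kernel E β} [IsMarkovKernel κ]

lemma integrable_log_isotropicGaussianPDF_div_compProd (hσ : σ ≠ 0) (hf_pos : ∀ x, 0 < f x)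
    (hrec : Integrable (fun w : E × β => ‖c w.2 - w.1‖ ^ 2) (μ ⊗ₘ κ))
    (hlogf : Integrable (fun x => log (f x)) μ) :
    Integrable (fun w => log (isotropicGaussianPDF σ (c w.2) w.1 / f w.1)) (μ ⊗ₘ κ) := by
  simp_rw [log_isotropicGaussianPDF_div hσ (hf_pos _)]
  exact (((hrec.const_mul _).add (integrable_const _)).add hlogf.comp_fst_compProd).neg

lemma integral_log_isotropicGaussianPDF_div_compProd (hσ : σ ≠ 0) (hf_pos : ∀ x, 0 < f x)
    (hrec : Integrable (fun w : E × β => ‖c w.2 - w.1‖ ^ 2) (μ ⊗ₘ κ))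
    (hlogf : Integrable (fun x => log (f x)) μ) :
    ∫ w, log (isotropicGaussianPDF σ (c w.2) w.1 / f w.1) ∂(μ ⊗ₘ κ)
      = -(1 / (2 * σ ^ 2) * ∫ x, ∫ z, ‖c z - x‖ ^ 2 ∂κ x ∂μ
        + (Module.finrank ℝ E : ℝ) / 2 * log (2 * π * σ ^ 2) + ∫ x, log (f x) ∂μ) := by
  have hlogf_fst := hlogf.comp_fst_compProd (κ := κ)
  simp_rw [log_isotropicGaussianPDF_div hσ (hf_pos _)]
  rw [integral_neg, integral_add, integral_add, integral_const_mul,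
    Measure.integral_compProd hrec, Measure.integral_compProd hlogf_fst]
  · simp only [integral_const, probReal_univ, smul_eq_mul, one_mul]
  all_goals fun_prop

end CompProd

variable [FiniteDimensional ℝ E] [BorelSpace E]

lemma integral_log_isotropicGaussianPDF_div_le_toReal_klDiv {μ : Measure E}
    [IsProbabilityMeasure μ] (hf : Measurable f) (hf_pos : ∀ x, 0 < f x)
    (hμ : μ = volume.withDensity fun x => ENNReal.ofReal (f x))
    {q : Measure β} [IsProbabilityMeasure q] {ρ : Measure (E × β)} [IsProbabilityMeasure ρ]
    (hc : Measurable c) (hσ : σ ≠ 0) (hρ : klDiv ρ (μ.prod q) ≠ ⊤)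
    (hG : Integrable (fun w => log (isotropicGaussianPDF σ (c w.2) w.1 / f w.1)) ρ) :
    ∫ w, log (isotropicGaussianPDF σ (c w.2) w.1 / f w.1) ∂ρ ≤ (klDiv ρ (μ.prod q)).toReal := by
  rw [klDiv_eq_coe_klDiv, ne_eq, EReal.coe_ennreal_eq_top_iff] at hρ
  rw [klDiv_eq_coe_klDiv, EReal.toReal_coe_ennreal]
  set g : E × β → ℝ := fun w => isotropicGaussianPDF σ (c w.2) w.1 / f w.1
  have h_pos (w : E × β) : 0 < g w := div_pos (isotropicGaussianPDF_pos hσ _ _) (hf_pos _)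
  have h_meas : Measurable g := by
    unfold g isotropicGaussianPDF
    fun_prop
  have h_lint : ∫⁻ w, ENNReal.ofReal (g w) ∂(μ.prod q) = 1 := by
    rw [lintegral_prod_symm _ h_meas.ennreal_ofReal.aemeasurable, hμ]
    have h_inner (z : β) : ∫⁻ x, ENNReal.ofReal (g (x, z))
        ∂(volume.withDensity fun x => ENNReal.ofReal (f x)) = 1 := by
      rw [lintegral_ofReal_div_withDensity hf hf_pos (by unfold isotropicGaussianPDF; fun_prop)]
      exact lintegral_ofReal_isotropicGaussianPDF hσ (c z)
    simp [h_inner]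
  have h_int : Integrable g (μ.prod q) :=
    (lintegral_ofReal_ne_top_iff_integrable h_meas.aestronglyMeasurable
      (Filter.Eventually.of_forall fun w => (h_pos w).le)).mp (by simp [h_lint])
  have h_one : ∫ w, g w ∂(μ.prod q) = 1 := by
    rw [integral_eq_lintegral_of_nonneg_ae (Filter.Eventually.of_forall fun w => (h_pos w).le)
      h_meas.aestronglyMeasurable, h_lint, ENNReal.toReal_one]
  have h_exp : (fun w => exp (log (g w))) = g := funext fun w => exp_log (h_pos w)
  have h_DV := integral_sub_log_integral_exp_le_toReal_klDiv (G := fun w => log (g w)) hρ hG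
    (by rwa [h_exp])
  rwa [h_exp, h_one, log_one, sub_zero] at h_DV

end GaussianDecoder

/-- **Upper bound on the aggregated-posterior KL via a Gaussian decoder.**
Let `μ` be a probability measure on `ℝ^d` with strictly positive density `f` with respect
to Lebesgue measure, `p` a prior on `ℝ^k`, `κ` a Markov kernel (encoder) with aggregated
posterior `q_Z` (the second marginal of `μ ⊗ κ`), `x_ψ : ℝ^k → ℝ^d` a measurable decoder
mean, and `σ > 0`. Under absolute continuity `κ x ≪ p` (μ-a.e.), finite mutual information
`I(X;Z) = D_KL(μ ⊗ κ ‖ μ × q_Z)`, and finiteness of the expectations involved,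
`D_KL(q_Z ‖ p) ≤ (1/(2σ²))·∫∫ ‖x_ψ(z) − x‖² dκ(x)(z) dμ(x) + (d/2)·log(2πσ²)
  + ∫ log f dμ + ∫ D_KL(κ(x) ‖ p) dμ(x)`. -/
theorem klDiv_aggregated_posterior_le_gaussian_decoder_bound
    (d k : ℕ)
    (μ : Measure (EuclideanSpace ℝ (Fin d))) [IsProbabilityMeasure μ]
    (f : EuclideanSpace ℝ (Fin d) → ℝ) (hf_meas : Measurable f) (hf_pos : ∀ x, 0 < f x)
    (hμ : μ = MeasureTheory.volume.withDensity (fun x => ENNReal.ofReal (f x)))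
    (p : Measure (EuclideanSpace ℝ (Fin k))) [IsProbabilityMeasure p]
    (κ : Kernel (EuclideanSpace ℝ (Fin d)) (EuclideanSpace ℝ (Fin k))) [IsMarkovKernel κ]
    (qZ : Measure (EuclideanSpace ℝ (Fin k))) (hqZ : qZ = (μ ⊗ₘ κ).snd)
    (xψ : EuclideanSpace ℝ (Fin k) → EuclideanSpace ℝ (Fin d)) (hxψ : Measurable xψ)
    (σ : ℝ) (hσ : 0 < σ)
    (hac : ∀ᵐ x ∂μ, κ x ≪ p)
    (hMI_fin : klDiv (μ ⊗ₘ κ) (μ.prod qZ) ≠ ⊤)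
    (hrec_int : Integrable
      (fun q : EuclideanSpace ℝ (Fin d) × EuclideanSpace ℝ (Fin k) => ‖xψ q.2 - q.1‖ ^ 2)
      (μ ⊗ₘ κ))
    (hlogf_int : Integrable (fun x => Real.log (f x)) μ)
    (hkl_fin : ∀ᵐ x ∂μ, klDiv (κ x) p ≠ ⊤)
    (hkl_int : Integrable (fun x => (klDiv (κ x) p).toReal) μ) :
    klDiv qZ p ≤
      (((1 / (2 * σ ^ 2)) * ∫ x, ∫ z, ‖xψ z - x‖ ^ 2 ∂(κ x) ∂μ
        + ((d : ℝ) / 2) * Real.log (2 * Real.pi * σ ^ 2)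
        + ∫ x, Real.log (f x) ∂μ
        + ∫ x, (klDiv (κ x) p).toReal ∂μ : ℝ) : EReal) := by
  subst hqZ
  have h_gibbs := integral_log_isotropicGaussianPDF_div_le_toReal_klDiv hf_meas hf_pos hμ hxψ
    hσ.ne' hMI_fin
    (integrable_log_isotropicGaussianPDF_div_compProd hσ.ne' hf_pos hrec_int hlogf_int)
  rw [integral_log_isotropicGaussianPDF_div_compProd hσ.ne' hf_pos hrec_int hlogf_int,
    finrank_euclideanSpace_fin] at h_gibbs
  rw [klDiv_snd_compProd_eq_integral_klDiv_sub μ κ p hac hMI_fin hkl_fin hkl_int,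
    EReal.coe_le_coe_iff]
  linarith
end
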